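/- arXiv:2406.06831 — 3 statements merged into one kernel-verified Lean document; each statement's English description precedes it below -/
import Mathlib

section
/- Let v : ℝ → ℝ be twice continuously differentiable, 2π-periodic and everywhere positive, and define G : ℝ² → ℝ by G(w) = r²/v(θ)² whenever w = r·(cos θ, sin θ) with r > 0 (and G(0) = 0). For w = r·(cos θ, sin θ) with r > 0, let e_θ = (−sin θ, cos θ). Then the fundamental tensor g_w(u₁,u₂) := (1/2)·∂²/∂s∂t [G(w + s·u₁ + t·u₂)]|_{s=t=0} satisfies g_w(e_θ, e_θ) = (1/v(θ)²)·(3·v'(θ)²/v(θ)² − v''(θ)/v(θ) + 1). -/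
/-- The fundamental tensor of `G = F²` at `w`, evaluated on `u₁, u₂`:
`g_w(u₁,u₂) = (1/2) ∂²/∂s∂t [G(w + s u₁ + t u₂)] |_{s=t=0}`. -/
noncomputable def fundTensor (G : ℝ × ℝ → ℝ) (w u₁ u₂ : ℝ × ℝ) : ℝ :=
  (1 / 2) * deriv (fun s : ℝ => deriv (fun t : ℝ => G (w + s • u₁ + t • u₂)) 0) 0

/-!
Along the tangent line `u ↦ w + u e_θ` through `w = r (cos θ, sin θ)` the polar coordinates are
`ρ = √(r² + u²)` and `θ + arctan (u / r)`, so `G` restricts to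
`h u = (r² + u²) f (θ + arctan (u / r))` with `f = v⁻²`. Since the angle has derivative
`r / (r² + u²)`, the derivative of `h` simplifies to
`2 u f (θ + arctan (u / r)) + r f' (θ + arctan (u / r))`, whence `h''(0) = 2 f(θ) + f''(θ)`.
Expanding `f'' = 6 v'² / v⁴ - 2 v'' / v³` gives the formula.
-/

open Real

lemma fundTensor_self (G : ℝ × ℝ → ℝ) (w u : ℝ × ℝ) :
    fundTensor G w u u = 1 / 2 * deriv (deriv fun t : ℝ => G (w + t • u)) 0 := by
  have hshift : ∀ s, deriv (fun t : ℝ => G (w + s • u + t • u)) 0 =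
      deriv (fun t : ℝ => G (w + t • u)) s := fun s => by
    simp_rw [add_assoc, ← add_smul]
    simpa using deriv_comp_const_add (fun t : ℝ => G (w + t • u)) s 0
  simp only [fundTensor, hshift]

lemma sqrt_sq_add_sq_eq_mul_sqrt {r : ℝ} (hr : 0 < r) (u : ℝ) :
    √(r ^ 2 + u ^ 2) = r * √(1 + (u / r) ^ 2) := by
  rw [← sqrt_sq hr.le, ← sqrt_mul (sq_nonneg r), sqrt_sq hr.le]
  have := hr.ne'
  congr 1
  field_simp

lemma polar_add_smul_tangent {r : ℝ} (hr : 0 < r) (θ u : ℝ) :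
    ((r * cos θ, r * sin θ) : ℝ × ℝ) + u • (-sin θ, cos θ) =
      (√(r ^ 2 + u ^ 2) * cos (θ + arctan (u / r)),
        √(r ^ 2 + u ^ 2) * sin (θ + arctan (u / r))) := by
  have hne : √(1 + (u / r) ^ 2) ≠ 0 := (sqrt_pos.2 (by positivity)).ne'
  have hcos : √(r ^ 2 + u ^ 2) * cos (arctan (u / r)) = r := by
    rw [sqrt_sq_add_sq_eq_mul_sqrt hr, cos_arctan]
    field_simp
  have hsin : √(r ^ 2 + u ^ 2) * sin (arctan (u / r)) = u := by
    rw [sqrt_sq_add_sq_eq_mul_sqrt hr, sin_arctan]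
    field_simp
  ext
  · simp only [Prod.fst_add, Prod.smul_fst, smul_eq_mul, cos_add]
    linear_combination (-cos θ) * hcos + sin θ * hsin
  · simp only [Prod.snd_add, Prod.smul_snd, smul_eq_mul, sin_add]
    linear_combination (-sin θ) * hcos - cos θ * hsin

section TangentProfile

variable {f : ℝ → ℝ} {r : ℝ}

lemma hasDerivAt_add_arctan_div (hr : r ≠ 0) (θ u : ℝ) :
    HasDerivAt (fun u => θ + arctan (u / r)) (r / (r ^ 2 + u ^ 2)) u := by
  refine (((hasDerivAt_id' u).div_const r).arctan.const_add θ).congr_deriv ?_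
  field_simp

lemma hasDerivAt_sq_add_sq_mul_comp_arctan (hr : r ≠ 0) (θ u : ℝ)
    (hf : DifferentiableAt ℝ f (θ + arctan (u / r))) :
    HasDerivAt (fun u => (r ^ 2 + u ^ 2) * f (θ + arctan (u / r)))
      (2 * u * f (θ + arctan (u / r)) + r * deriv f (θ + arctan (u / r))) u := by
  have hN : HasDerivAt (fun u : ℝ => r ^ 2 + u ^ 2) (2 * u) u := by
    simpa using (hasDerivAt_pow 2 u).const_add (r ^ 2)
  have hne : r ^ 2 + u ^ 2 ≠ 0 := by positivity
  refine (hN.mul (hf.hasDerivAt.comp u (hasDerivAt_add_arctan_div hr θ u))).congr_deriv ?_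
  simp only [Function.comp_apply]
  field_simp

lemma deriv_deriv_sq_add_sq_mul_comp_arctan (hr : r ≠ 0) (θ : ℝ) {f₂ : ℝ}
    (hf : Differentiable ℝ f) (hf' : HasDerivAt (deriv f) f₂ θ) :
    deriv (deriv fun u => (r ^ 2 + u ^ 2) * f (θ + arctan (u / r))) 0 = 2 * f θ + f₂ := by
  have hderiv : deriv (fun u => (r ^ 2 + u ^ 2) * f (θ + arctan (u / r))) =
      fun u => 2 * u * f (θ + arctan (u / r)) + r * deriv f (θ + arctan (u / r)) :=
    funext fun u => (hasDerivAt_sq_add_sq_mul_comp_arctan hr θ u (hf _)).deriv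
  have hφ := hasDerivAt_add_arctan_div hr θ 0
  have hφ0 : θ + arctan (0 / r) = θ := by simp
  have h₁ := ((hasDerivAt_id' (0 : ℝ)).const_mul 2).mul
    ((hf θ).hasDerivAt.comp_of_eq 0 hφ hφ0.symm)
  have h₂ := (hf'.comp_of_eq 0 hφ hφ0.symm).const_mul r
  rw [hderiv]
  refine HasDerivAt.deriv ((h₁.add h₂).congr_deriv ?_)
  simp only [Function.comp_apply, hφ0]
  field_simp
  ring

end TangentProfile

section InvSq

variable {v : ℝ → ℝ}

lemma hasDerivAt_inv_sq {x : ℝ} (hv : DifferentiableAt ℝ v x) (hx : v x ≠ 0) :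
    HasDerivAt (fun x => (v x ^ 2)⁻¹) (-2 * deriv v x / v x ^ 3) x := by
  refine ((hv.hasDerivAt.pow 2).inv (pow_ne_zero 2 hx)).congr_deriv ?_
  simp only [Pi.pow_apply]
  field_simp
  ring

lemma hasDerivAt_deriv_inv_sq (hv : Differentiable ℝ v) {x : ℝ}
    (hv' : DifferentiableAt ℝ (deriv v) x) (hne : ∀ x, v x ≠ 0) :
    HasDerivAt (deriv fun x => (v x ^ 2)⁻¹)
      (6 * deriv v x ^ 2 / v x ^ 4 - 2 * deriv (deriv v) x / v x ^ 3) x := by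
  have hderiv : deriv (fun x => (v x ^ 2)⁻¹) = fun x => -2 * deriv v x / v x ^ 3 :=
    funext fun x => (hasDerivAt_inv_sq (hv x) (hne x)).deriv
  rw [hderiv]
  refine ((hv'.hasDerivAt.const_mul (-2)).div ((hv x).hasDerivAt.pow 3)
    (pow_ne_zero 3 (hne x))).congr_deriv ?_
  have := hne x
  simp only [Pi.pow_apply]
  field_simp
  ring

end InvSq

theorem fundTensor_etheta_etheta_general
    (v : ℝ → ℝ) (hv : ContDiff ℝ 2 v)
    (hpos : ∀ θ, 0 < v θ) (G : ℝ × ℝ → ℝ)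
    (hG : ∀ r θ : ℝ, 0 < r → G (r * Real.cos θ, r * Real.sin θ) = r ^ 2 / (v θ) ^ 2) :
    ∀ r θ : ℝ, 0 < r →
      fundTensor G (r * Real.cos θ, r * Real.sin θ)
        (-Real.sin θ, Real.cos θ) (-Real.sin θ, Real.cos θ) =
        (1 / (v θ) ^ 2) *
          (3 * (deriv v θ) ^ 2 / (v θ) ^ 2 - deriv (deriv v) θ / v θ + 1) := by
  intro r θ hr
  have hv₁ : Differentiable ℝ v := hv.differentiable (by norm_num)
  have hv₂ : Differentiable ℝ (deriv v) := by
    simpa using hv.differentiable_iteratedDeriv 1 (by norm_num)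
  have hne : ∀ x, v x ≠ 0 := fun x => (hpos x).ne'
  have hline : (fun t : ℝ => G ((r * cos θ, r * sin θ) + t • (-sin θ, cos θ))) =
      fun u => (r ^ 2 + u ^ 2) * (v (θ + arctan (u / r)) ^ 2)⁻¹ := funext fun u => by
    rw [polar_add_smul_tangent hr, hG _ _ (by positivity), sq_sqrt (by positivity), div_eq_mul_inv]
  rw [fundTensor_self, hline, deriv_deriv_sq_add_sq_mul_comp_arctan hr.ne' θ
    (fun x => (hasDerivAt_inv_sq (hv₁ x) (hne x)).differentiableAt)
    (hasDerivAt_deriv_inv_sq hv₁ (hv₂ θ) hne)]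
  have := hne θ
  field_simp
  ring

/-- `g_w(e_θ, e_θ) = (1/v(θ)²)(3 v'(θ)²/v(θ)² − v''(θ)/v(θ) + 1)`. -/
theorem fundTensor_etheta_etheta
    (v : ℝ → ℝ) (hv : ContDiff ℝ 2 v) (hper : ∀ θ, v (θ + 2 * Real.pi) = v θ)
    (hpos : ∀ θ, 0 < v θ) (G : ℝ × ℝ → ℝ)
    (hG : ∀ r θ : ℝ, 0 < r → G (r * Real.cos θ, r * Real.sin θ) = r ^ 2 / (v θ) ^ 2)
    (hG0 : G 0 = 0) :
    ∀ r θ : ℝ, 0 < r →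
      fundTensor G (r * Real.cos θ, r * Real.sin θ)
        (-Real.sin θ, Real.cos θ) (-Real.sin θ, Real.cos θ) =
        (1 / (v θ) ^ 2) *
          (3 * (deriv v θ) ^ 2 / (v θ) ^ 2 - deriv (deriv v) θ / v θ + 1) :=
  fundTensor_etheta_etheta_general v hv hpos G hG
end

section
/- Let v : ℝ → ℝ be twice continuously differentiable, 2π-periodic and everywhere positive, and define G : ℝ² → ℝ by G(w) = r²/v(θ)² whenever w = r·(cos θ, sin θ) with r > 0 (and G(0) = 0). For w = r·(cos θ, sin θ) with r > 0, the fundamental tensor g_w(u₁,u₂) := (1/2)·∂²/∂s∂t [G(w + s·u₁ + t·u₂)]|_{s=t=0} evaluated on the standard basis vectors e₁ = (1,0), e₂ = (0,1) satisfies g_w(e₁, e₂) = (1/v(θ)²)·(−cos(2θ)·v'(θ)/v(θ) − (1/2)·sin(2θ)·(3·v'(θ)²/v(θ)² − v''(θ)/v(θ))). -/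
/-! On the half-plane `x cos θ + y sin θ > 0` the polar angle has the smooth branch
`α = θ + arctan ((y cos θ - x sin θ) / (x cos θ + y sin θ))`, with `∂α/∂x = -y / (x² + y²)` and
`∂α/∂y = x / (x² + y²)`, and there `G (x, y) = (x² + y²) / v(α)²`. Differentiating this in `y`
and then in `x` by the chain rule and evaluating at `(r cos θ, r sin θ)`, where `α = θ`, gives the
mixed partial `∂²G/∂x∂y = 2 g_w(e₁, e₂)`. -/

open Real Filter Topology

lemma sqrt_one_add_div_sq {a : ℝ} (ha : 0 < a) (b : ℝ) :
    √(1 + (b / a) ^ 2) = √(a ^ 2 + b ^ 2) / a := by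
  rw [show 1 + (b / a) ^ 2 = (√(a ^ 2 + b ^ 2) / a) ^ 2 by
    rw [div_pow √(a ^ 2 + b ^ 2), sq_sqrt (by positivity)]; field_simp]
  exact sqrt_sq (by positivity)

lemma sqrt_mul_cos_add_arctan_div (θ : ℝ) {a : ℝ} (ha : 0 < a) (b : ℝ) :
    √(a ^ 2 + b ^ 2) * cos (θ + arctan (b / a)) = a * cos θ - b * sin θ := by
  have : 0 < √(a ^ 2 + b ^ 2) := by positivity
  rw [cos_add, cos_arctan, sin_arctan, sqrt_one_add_div_sq ha]
  field_simp

lemma sqrt_mul_sin_add_arctan_div (θ : ℝ) {a : ℝ} (ha : 0 < a) (b : ℝ) :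
    √(a ^ 2 + b ^ 2) * sin (θ + arctan (b / a)) = a * sin θ + b * cos θ := by
  have : 0 < √(a ^ 2 + b ^ 2) := by positivity
  rw [sin_add, cos_arctan, sin_arctan, sqrt_one_add_div_sq ha]
  field_simp

/-- A smooth branch of the polar angle on the half-plane `x cos θ + y sin θ > 0`. -/
noncomputable def localAngle (θ x y : ℝ) : ℝ :=
  θ + arctan ((y * cos θ - x * sin θ) / (x * cos θ + y * sin θ))

lemma rotate_sq_add_sq (θ x y : ℝ) :
    (x * cos θ + y * sin θ) ^ 2 + (y * cos θ - x * sin θ) ^ 2 = x ^ 2 + y ^ 2 := by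
  linear_combination (x ^ 2 + y ^ 2) * sin_sq_add_cos_sq θ

lemma localAngle_mul_cos_mul_sin (θ r : ℝ) : localAngle θ (r * cos θ) (r * sin θ) = θ := by
  simp [localAngle, mul_right_comm]

lemma sqrt_mul_cos_localAngle {θ x y : ℝ} (h : 0 < x * cos θ + y * sin θ) :
    √(x ^ 2 + y ^ 2) * cos (localAngle θ x y) = x := by
  rw [localAngle, ← rotate_sq_add_sq θ x y, sqrt_mul_cos_add_arctan_div θ h]
  linear_combination x * sin_sq_add_cos_sq θ

lemma sqrt_mul_sin_localAngle {θ x y : ℝ} (h : 0 < x * cos θ + y * sin θ) :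
    √(x ^ 2 + y ^ 2) * sin (localAngle θ x y) = y := by
  rw [localAngle, ← rotate_sq_add_sq θ x y, sqrt_mul_sin_add_arctan_div θ h]
  linear_combination y * sin_sq_add_cos_sq θ

lemma hasDerivAt_localAngle_right {θ x y : ℝ} (h : 0 < x * cos θ + y * sin θ) :
    HasDerivAt (fun y => localAngle θ x y) (x / (x ^ 2 + y ^ 2)) y := by
  have hq : HasDerivAt (fun y => (y * cos θ - x * sin θ) / (x * cos θ + y * sin θ))
      (x / (x * cos θ + y * sin θ) ^ 2) y := by
    refine (((hasDerivAt_id' y).mul_const _).sub_const _).div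
      (((hasDerivAt_id' y).mul_const _).const_add _) h.ne' |>.congr_deriv ?_
    linear_combination x * sin_sq_add_cos_sq θ / (x * cos θ + y * sin θ) ^ 2
  refine (hq.arctan.const_add θ).congr_deriv ?_
  rw [← rotate_sq_add_sq θ x y]
  generalize x * cos θ + y * sin θ = a at h ⊢
  field_simp

lemma hasDerivAt_localAngle_left {θ x y : ℝ} (h : 0 < x * cos θ + y * sin θ) :
    HasDerivAt (fun x => localAngle θ x y) (-y / (x ^ 2 + y ^ 2)) x := by
  have hq : HasDerivAt (fun x => (y * cos θ - x * sin θ) / (x * cos θ + y * sin θ))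
      (-y / (x * cos θ + y * sin θ) ^ 2) x := by
    refine (((hasDerivAt_id' x).mul_const _).const_sub _).div
      (((hasDerivAt_id' x).mul_const _).add_const _) h.ne' |>.congr_deriv ?_
    linear_combination -y * sin_sq_add_cos_sq θ / (x * cos θ + y * sin θ) ^ 2
  refine (hq.arctan.const_add θ).congr_deriv ?_
  rw [← rotate_sq_add_sq θ x y]
  generalize x * cos θ + y * sin θ = a at h ⊢
  field_simp

lemma apply_eq_div_sq_localAngle {v : ℝ → ℝ} {G : ℝ × ℝ → ℝ}
    (hG : ∀ r θ : ℝ, 0 < r → G (r * cos θ, r * sin θ) = r ^ 2 / (v θ) ^ 2)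
    {θ x y : ℝ} (h : 0 < x * cos θ + y * sin θ) :
    G (x, y) = (x ^ 2 + y ^ 2) / v (localAngle θ x y) ^ 2 := by
  have hnorm : 0 < x ^ 2 + y ^ 2 := by
    rw [← rotate_sq_add_sq θ x y]; positivity
  have := hG _ (localAngle θ x y) (sqrt_pos.2 hnorm)
  rwa [sqrt_mul_cos_localAngle h, sqrt_mul_sin_localAngle h, sq_sqrt hnorm.le] at this

section ModelFunction

variable {v : ℝ → ℝ} {θ x y : ℝ}

lemma hasDerivAt_div_sq_localAngle_right (h : 0 < x * cos θ + y * sin θ)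
    (hv : DifferentiableAt ℝ v (localAngle θ x y)) (hv0 : v (localAngle θ x y) ≠ 0) :
    HasDerivAt (fun y => (x ^ 2 + y ^ 2) / v (localAngle θ x y) ^ 2)
      (2 * y / v (localAngle θ x y) ^ 2
        - 2 * x * deriv v (localAngle θ x y) / v (localAngle θ x y) ^ 3) y := by
  have hvα := hv.hasDerivAt.comp y (hasDerivAt_localAngle_right h)
  refine (((hasDerivAt_pow 2 y).const_add (x ^ 2)).div (hvα.pow 2)
    (pow_ne_zero 2 hv0)).congr_deriv ?_
  have hnorm : x ^ 2 + y ^ 2 ≠ 0 := by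
    rw [← rotate_sq_add_sq θ x y]; positivity
  simp only [Function.comp_def, Pi.pow_apply]
  field_simp
  ring

lemma hasDerivAt_deriv_div_sq_localAngle_left (h : 0 < x * cos θ + y * sin θ)
    (hv : DifferentiableAt ℝ v (localAngle θ x y))
    (hv' : DifferentiableAt ℝ (deriv v) (localAngle θ x y)) (hv0 : v (localAngle θ x y) ≠ 0) :
    HasDerivAt (fun x => 2 * y / v (localAngle θ x y) ^ 2
        - 2 * x * deriv v (localAngle θ x y) / v (localAngle θ x y) ^ 3)
      ((4 * y ^ 2 * deriv v (localAngle θ x y) + 2 * x * y * deriv (deriv v) (localAngle θ x y))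
          / ((x ^ 2 + y ^ 2) * v (localAngle θ x y) ^ 3)
        - 2 * deriv v (localAngle θ x y) / v (localAngle θ x y) ^ 3
        - 6 * x * y * deriv v (localAngle θ x y) ^ 2
          / ((x ^ 2 + y ^ 2) * v (localAngle θ x y) ^ 4)) x := by
  have hα := hasDerivAt_localAngle_left h
  have hvα := hv.hasDerivAt.comp x hα
  have hv'α := hv'.hasDerivAt.comp x hα
  refine (((hasDerivAt_const x (2 * y)).div (hvα.pow 2) (pow_ne_zero 2 hv0)).sub
    ((((hasDerivAt_id' x).const_mul 2).mul hv'α).div (hvα.pow 3)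
      (pow_ne_zero 3 hv0))).congr_deriv ?_
  have hnorm : x ^ 2 + y ^ 2 ≠ 0 := by
    rw [← rotate_sq_add_sq θ x y]; positivity
  simp only [Function.comp_def, Pi.pow_apply, Pi.mul_apply]
  field_simp
  ring

end ModelFunction

lemma deriv_deriv_of_polar {v : ℝ → ℝ} (hv : Differentiable ℝ v) (hpos : ∀ θ, 0 < v θ)
    {G : ℝ × ℝ → ℝ} (hG : ∀ r θ : ℝ, 0 < r → G (r * cos θ, r * sin θ) = r ^ 2 / (v θ) ^ 2)
    {θ x₀ y₀ : ℝ} (h : 0 < x₀ * cos θ + y₀ * sin θ)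
    (hv' : DifferentiableAt ℝ (deriv v) (localAngle θ x₀ y₀)) :
    deriv (fun x => deriv (fun y => G (x, y)) y₀) x₀ =
      (4 * y₀ ^ 2 * deriv v (localAngle θ x₀ y₀)
          + 2 * x₀ * y₀ * deriv (deriv v) (localAngle θ x₀ y₀))
          / ((x₀ ^ 2 + y₀ ^ 2) * v (localAngle θ x₀ y₀) ^ 3)
        - 2 * deriv v (localAngle θ x₀ y₀) / v (localAngle θ x₀ y₀) ^ 3
        - 6 * x₀ * y₀ * deriv v (localAngle θ x₀ y₀) ^ 2
          / ((x₀ ^ 2 + y₀ ^ 2) * v (localAngle θ x₀ y₀) ^ 4) := by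
  have hU : ∀ᶠ p in 𝓝 x₀ ×ˢ 𝓝 y₀, 0 < p.1 * cos θ + p.2 * sin θ := by
    rw [← nhds_prod_eq]
    exact continuousAt_const.eventually_lt (by fun_prop) h
  have hpartial : (fun x => deriv (fun y => G (x, y)) y₀) =ᶠ[𝓝 x₀] fun x =>
      2 * y₀ / v (localAngle θ x y₀) ^ 2
        - 2 * x * deriv v (localAngle θ x y₀) / v (localAngle θ x y₀) ^ 3 := by
    filter_upwards [hU.curry] with x hx
    rw [Filter.EventuallyEq.deriv_eq (hx.mono fun y hy => apply_eq_div_sq_localAngle hG hy)]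
    exact (hasDerivAt_div_sq_localAngle_right hx.self_of_nhds (hv _) (hpos _).ne').deriv
  rw [hpartial.deriv_eq]
  exact (hasDerivAt_deriv_div_sq_localAngle_left h (hv _) hv' (hpos _).ne').deriv

lemma fundTensor_e1_e2_eq_deriv_deriv (G : ℝ × ℝ → ℝ) (x₀ y₀ : ℝ) :
    fundTensor G (x₀, y₀) (1, 0) (0, 1) =
      1 / 2 * deriv (fun x => deriv (fun y => G (x, y)) y₀) x₀ := by
  have hshift (s t : ℝ) :
      (x₀, y₀) + s • ((1 : ℝ), (0 : ℝ)) + t • ((0 : ℝ), (1 : ℝ)) = (x₀ + s, y₀ + t) := by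
    simp
  have hinner (x : ℝ) : deriv (fun t => G (x, y₀ + t)) 0 = deriv (fun y => G (x, y)) y₀ := by
    simpa using deriv_comp_const_add (fun y => G (x, y)) y₀ 0
  simp only [fundTensor, hshift, hinner]
  simpa using deriv_comp_const_add (fun x => deriv (fun y => G (x, y)) y₀) x₀ 0

theorem fundTensor_e1_e2_general
    (v : ℝ → ℝ) (hv : ContDiff ℝ 2 v)
    (hpos : ∀ θ, 0 < v θ) (G : ℝ × ℝ → ℝ)
    (hG : ∀ r θ : ℝ, 0 < r → G (r * Real.cos θ, r * Real.sin θ) = r ^ 2 / (v θ) ^ 2) :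
    ∀ r θ : ℝ, 0 < r →
      fundTensor G (r * Real.cos θ, r * Real.sin θ) (1, 0) (0, 1) =
        (1 / (v θ) ^ 2) *
          (-Real.cos (2 * θ) * (deriv v θ / v θ)
            - (1 / 2) * Real.sin (2 * θ) *
                (3 * (deriv v θ) ^ 2 / (v θ) ^ 2 - deriv (deriv v) θ / v θ)) := by
  intro r θ hr
  have hnorm : (r * cos θ) ^ 2 + (r * sin θ) ^ 2 = r ^ 2 := by
    linear_combination r ^ 2 * cos_sq_add_sin_sq θ
  have h : 0 < r * cos θ * cos θ + r * sin θ * sin θ := by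
    linear_combination hr - r * cos_sq_add_sin_sq θ
  rw [fundTensor_e1_e2_eq_deriv_deriv,
    deriv_deriv_of_polar (hv.differentiable two_ne_zero) hpos hG h (hv.differentiable_deriv_two _),
    localAngle_mul_cos_mul_sin, hnorm, cos_two_mul, cos_sq', sin_two_mul]
  have := (hpos θ).ne'
  field_simp
  ring

/-- In Cartesian coordinates,
`g_w(e₁,e₂) = (1/v²)(−cos(2θ) v'/v − (1/2) sin(2θ)(3 v'²/v² − v''/v))`. -/
theorem fundTensor_e1_e2
    (v : ℝ → ℝ) (hv : ContDiff ℝ 2 v) (hper : ∀ θ, v (θ + 2 * Real.pi) = v θ)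
    (hpos : ∀ θ, 0 < v θ) (G : ℝ × ℝ → ℝ)
    (hG : ∀ r θ : ℝ, 0 < r → G (r * Real.cos θ, r * Real.sin θ) = r ^ 2 / (v θ) ^ 2)
    (hG0 : G 0 = 0) :
    ∀ r θ : ℝ, 0 < r →
      fundTensor G (r * Real.cos θ, r * Real.sin θ) (1, 0) (0, 1) =
        (1 / (v θ) ^ 2) *
          (-Real.cos (2 * θ) * (deriv v θ / v θ)
            - (1 / 2) * Real.sin (2 * θ) *
                (3 * (deriv v θ) ^ 2 / (v θ) ^ 2 - deriv (deriv v) θ / v θ)) :=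
  fundTensor_e1_e2_general v hv hpos G hG
end

section
/- Let a, b ∈ ℝ with a ≠ 0 and b ≠ 0, and define u : ℝ → ℝ by u(θ) = √(h(θ/2)), where h(φ) = |cos φ|³/|a|³ + sin²φ/b². Then u is twice continuously differentiable on all of ℝ (in particular, the absolute-value terms do not destroy C² regularity). -/
/-!
The only non-smooth ingredient of `h` is `|cos φ|³`, and `y ↦ |y|³` is `C²`: its derivative is
`3 y|y|`, and `y ↦ y|y|` has the continuous derivative `2|y|` (at `0` because `y|y| = o(y)`).
Moreover `h` never vanishes, since `sin² φ = 1` wherever `cos φ = 0`, so the square root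
preserves `C²` regularity.
-/

open Asymptotics Topology

theorem ContDiff.of_hasDerivAt {𝕜 F : Type*} [NontriviallyNormedField 𝕜] [NormedAddCommGroup F]
    [NormedSpace 𝕜 F] {n : ℕ} {f f' : 𝕜 → F} (hf' : ContDiff 𝕜 n f')
    (hf : ∀ x, HasDerivAt f (f' x) x) : ContDiff 𝕜 (n + 1) f := by
  have hderiv : deriv f = f' := funext fun x => (hf x).deriv
  exact contDiff_succ_iff_deriv.2
    ⟨fun x => (hf x).differentiableAt, fun hω => absurd hω (by simp), hderiv ▸ hf'⟩

theorem hasDerivAt_mul_abs (x : ℝ) : HasDerivAt (fun y => y * |y|) (2 * |x|) x := by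
  rcases eq_or_ne x 0 with rfl | hx
  · rw [hasDerivAt_iff_isLittleO_nhds_zero]
    simpa using (isBigO_refl (fun h : ℝ => h) (𝓝 0)).mul_isLittleO
      ((isLittleO_one_iff ℝ).2 (continuous_abs.tendsto' 0 0 abs_zero))
  · exact ((hasDerivAt_id' x).mul (hasDerivAt_abs hx)).congr_deriv (by rw [self_mul_sign]; ring)

theorem hasDerivAt_abs_pow_three (x : ℝ) :
    HasDerivAt (fun y => |y| ^ 3) (3 * (x * |x|)) x := by
  have hcube : (fun y : ℝ => |y| ^ 3) = fun y => y * (y * |y|) := by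
    funext y
    rw [pow_succ, sq_abs]
    ring
  rw [hcube]
  exact ((hasDerivAt_id' x).mul (hasDerivAt_mul_abs x)).congr_deriv (by ring)

theorem contDiff_mul_abs : ContDiff ℝ 1 (fun x : ℝ => x * |x|) := by
  simpa using ContDiff.of_hasDerivAt (n := 0) (contDiff_zero.2 (by fun_prop)) hasDerivAt_mul_abs

theorem contDiff_abs_pow_three : ContDiff ℝ 2 (fun x : ℝ => |x| ^ 3) :=
  ContDiff.of_hasDerivAt (n := 1) (contDiff_mul_abs.const_smul (3 : ℝ)) hasDerivAt_abs_pow_three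

theorem abs_cos_pow_three_div_add_sin_sq_div_pos {a b : ℝ} (ha : a ≠ 0) (hb : b ≠ 0) (φ : ℝ) :
    0 < |Real.cos φ| ^ 3 / |a| ^ 3 + Real.sin φ ^ 2 / b ^ 2 := by
  rcases eq_or_ne (Real.cos φ) 0 with hcos | hcos
  · have hsin : Real.sin φ ^ 2 = 1 := by nlinarith [Real.sin_sq_add_cos_sq φ]
    rw [hcos, hsin]
    positivity
  · have : 0 < |Real.cos φ| := abs_pos.2 hcos
    positivity

/-- For `a, b ≠ 0`, the function
`u(θ) = √(h(θ/2))`, with `h(φ) = |cos φ|³/|a|³ + sin²φ/b²`, is twice continuously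
differentiable on all of `ℝ`. -/
theorem gielis_u_contDiff (a b : ℝ) (ha : a ≠ 0) (hb : b ≠ 0) (h u : ℝ → ℝ)
    (hh : ∀ φ, h φ = |Real.cos φ| ^ 3 / |a| ^ 3 + Real.sin φ ^ 2 / b ^ 2)
    (hu : ∀ θ, u θ = Real.sqrt (h (θ / 2))) :
    ContDiff ℝ 2 u := by
  have h_contDiff : ContDiff ℝ 2 h := by
    rw [funext hh]
    exact ((contDiff_abs_pow_three.comp Real.contDiff_cos).div_const _).add
      ((Real.contDiff_sin.pow 2).div_const _)
  have h_pos (φ : ℝ) : 0 < h φ := hh φ ▸ abs_cos_pow_three_div_add_sin_sq_div_pos ha hb φ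
  rw [funext hu]
  exact (h_contDiff.comp (contDiff_id.div_const 2)).sqrt fun θ => (h_pos (θ / 2)).ne'
end
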